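/- Let A_{k+1}(ε) be the (k+1)×(k+1) matrix with entries a_{r,s} = (ε^{r+s-1}-(-ε)^{r+s-1})/(r+s-1) for ε > 0. Then each entry of the inverse A_{k+1}(ε)^{-1} at position (r,s) equals α_{r,s}·ε^{-(r+s-1)} for some real number α_{r,s} independent of ε. Moreover α_{r,s} = 0 whenever r+s is odd. -/

import Mathlib

/-!
The substitution x = ε t shows that the Gram matrix scales as
A(ε) = D A(1) D with D = diag(√ε ε^r), so A(ε)⁻¹ = D⁻¹ A(1)⁻¹ D⁻¹ and one can take α = A(1)⁻¹.
The entries of A(ε) vanish off the checkerboard pattern, i.e. A = S A S for S = diag((-1)^r);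
the same identity then holds for A⁻¹, which forces its entries with r + s odd to vanish.
-/

open Matrix

namespace Matrix

variable {n K : Type*} [Fintype n] [DecidableEq n] [Field K]

theorem inv_diagonal_of_ne_zero {d : n → K} (hd : ∀ i, d i ≠ 0) :
    (diagonal d)⁻¹ = diagonal fun i => (d i)⁻¹ := by
  apply inv_eq_right_inv
  rw [diagonal_mul_diagonal, ← diagonal_one]
  exact congrArg diagonal (funext fun i => mul_inv_cancel₀ (hd i))

theorem inv_diagonal_mul_mul_diagonal_apply {d e : n → K} (hd : ∀ i, d i ≠ 0)
    (he : ∀ i, e i ≠ 0) (A : Matrix n n K) (i j : n) :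
    (diagonal d * A * diagonal e)⁻¹ i j = (e i)⁻¹ * A⁻¹ i j * (d j)⁻¹ := by
  rw [mul_inv_rev, mul_inv_rev, inv_diagonal_of_ne_zero hd, inv_diagonal_of_ne_zero he,
    ← Matrix.mul_assoc, mul_diagonal, diagonal_mul]

theorem inv_apply_eq_zero_of_odd [CharZero K] {m : ℕ} {A : Matrix (Fin m) (Fin m) K}
    (hA : ∀ i j : Fin m, Odd ((i : ℕ) + j) → A i j = 0) {i j : Fin m}
    (hij : Odd ((i : ℕ) + j)) : A⁻¹ i j = 0 := by
  set σ : Fin m → K := fun i => (-1) ^ (i : ℕ)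
  have hσ : ∀ i, σ i ≠ 0 := fun i => pow_ne_zero _ (neg_ne_zero.mpr one_ne_zero)
  have hσσ : ∀ i j : Fin m, σ i * σ j = (-1) ^ ((i : ℕ) + j) := fun i j => (pow_add ..).symm
  have hconj : diagonal σ * A * diagonal σ = A := by
    ext i j
    rw [mul_diagonal, diagonal_mul, mul_right_comm, hσσ]
    rcases Nat.even_or_odd ((i : ℕ) + j) with h | h
    · rw [h.neg_one_pow, one_mul]
    · rw [hA i j h, mul_zero]
  have hflip : A⁻¹ i j = -A⁻¹ i j := by
    conv_lhs => rw [← hconj, inv_diagonal_mul_mul_diagonal_apply hσ hσ]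
    rw [mul_right_comm, ← mul_inv, hσσ, hij.neg_one_pow, inv_neg_one, neg_one_mul]
  exact CharZero.neg_eq_self_iff.mp hflip.symm

end Matrix

/-- The Gram matrix of `1, x, …, x^k` in `L²([-ε, ε])`. -/
noncomputable def monomialGram (k : ℕ) (ε : ℝ) : Matrix (Fin (k + 1)) (Fin (k + 1)) ℝ :=
  of fun r s => (ε ^ ((r : ℕ) + s + 1) - (-ε) ^ ((r : ℕ) + s + 1)) / ((r : ℕ) + s + 1)

theorem monomialGram_apply_eq_zero_of_odd (k : ℕ) (ε : ℝ) (r s : Fin (k + 1))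
    (h : Odd ((r : ℕ) + s)) : monomialGram k ε r s = 0 := by
  rw [monomialGram, of_apply, h.add_one.neg_pow, sub_self, zero_div]

theorem Real.sqrt_mul_pow_mul_sqrt_mul_pow {ε : ℝ} (hε : 0 ≤ ε) (m n : ℕ) :
    √ε * ε ^ m * (√ε * ε ^ n) = ε ^ (m + n + 1) := by
  rw [mul_mul_mul_comm, Real.mul_self_sqrt hε, ← pow_add, pow_succ']

theorem monomialGram_eq_diagonal_mul_mul_diagonal (k : ℕ) {ε : ℝ} (hε : 0 ≤ ε) :
    monomialGram k ε = diagonal (fun r : Fin (k + 1) => √ε * ε ^ (r : ℕ)) * monomialGram k 1 *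
      diagonal (fun r : Fin (k + 1) => √ε * ε ^ (r : ℕ)) := by
  ext r s
  rw [mul_diagonal, diagonal_mul, mul_right_comm, Real.sqrt_mul_pow_mul_sqrt_mul_pow hε]
  simp only [monomialGram, of_apply, neg_pow ε, one_pow]
  ring

theorem stmt_13 (k : ℕ) :
    ∃ α : Fin (k + 1) → Fin (k + 1) → ℝ,
      ∀ r s : Fin (k + 1),
        (∀ ε : ℝ, 0 < ε →
          (Matrix.of (fun r s : Fin (k + 1) =>
            (ε ^ ((r : ℕ) + (s : ℕ) + 1) - (-ε) ^ ((r : ℕ) + (s : ℕ) + 1)) /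
              ((r : ℕ) + (s : ℕ) + 1)))⁻¹ r s = α r s / ε ^ ((r : ℕ) + (s : ℕ) + 1)) ∧
        (Odd ((r : ℕ) + (s : ℕ)) → α r s = 0) := by
  refine ⟨fun r s => (monomialGram k 1)⁻¹ r s, fun r s => ⟨fun ε hε => ?_, fun hodd =>
    inv_apply_eq_zero_of_odd (monomialGram_apply_eq_zero_of_odd k 1) hodd⟩⟩
  have hd : ∀ r : Fin (k + 1), √ε * ε ^ (r : ℕ) ≠ 0 := fun r =>
    mul_ne_zero (Real.sqrt_ne_zero'.mpr hε) (pow_ne_zero _ hε.ne')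
  change (monomialGram k ε)⁻¹ r s = _
  rw [monomialGram_eq_diagonal_mul_mul_diagonal k hε.le,
    inv_diagonal_mul_mul_diagonal_apply hd hd, ← Real.sqrt_mul_pow_mul_sqrt_mul_pow hε.le]
  ring
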